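/- Let A be a symmetric m×m integer matrix and u, N ∈ ℤ^m, and suppose χ_{A,u}[N](q,z) = Σ_{n ∈ ℤ^m} z^{u·n} q^{(1/2) n A nᵀ} Π_a [e_a·(N + n − nA), e_a·n]⁺_q is a well-defined (finitely supported) sum. Then for any index a, χ_{A,u}[N] = χ_{A,u}[N − e_a] + z^{u_a} q^{N_a − A_{aa}/2} χ_{A,u}[N − e_a A], where e_a A denotes the a-th row of A. -/

import Mathlib

noncomputable section

/-- The ring `ℤ[q^{1/2}, q^{-1/2}, z, z^{-1}]`: the monomial `(a,b)` stands for
`q^{a/2} z^b`. -/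
abbrev LL := AddMonoidAlgebra ℤ (ℤ × ℤ)

/-- `Qh a = q^{a/2}`. -/
def Qh (a : ℤ) : LL := AddMonoidAlgebra.single (a, 0) 1

/-- `Zv b = z^b`. -/
def Zv (b : ℤ) : LL := AddMonoidAlgebra.single (0, b) 1

def gaussRecL (v : LL) : ℕ → ℕ → LL
  | 0, 0 => 1
  | 0, _ + 1 => 0
  | _ + 1, 0 => 1
  | n + 1, m + 1 => gaussRecL v n (m + 1) * v ^ (m + 1) + gaussRecL v n m

def gaussZL (v : LL) (n m : ℤ) : LL :=
  if 0 ≤ m ∧ m ≤ n then gaussRecL v n.toNat m.toNat else 0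

/-- The Gaussian binomial `[n m]_q`, with `q = Qh 2`. -/
def qbinL (n m : ℤ) : LL := gaussZL (Qh 2) n m

/-- The extended q-binomial `[n m]⁺_q`. -/
def qbinPlusL (n m : ℤ) : LL :=
  if 0 ≤ n then qbinL n m
  else (-1) ^ (n - m).natAbs * Qh (-((n - m) ^ 2 + (n - m))) *
    gaussZL (Qh (-2)) (-m - 1) (-n - 1)


/-- A single summand of `χ_{A,u}[N](q,z)`. -/
def chiTerm {m : ℕ} (A : Matrix (Fin m) (Fin m) ℤ) (u N : Fin m → ℤ)
    (n : Fin m → ℤ) : LL :=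
  Zv (∑ i, u i * n i) * Qh (∑ i, ∑ j, n i * A i j * n j) *
    ∏ a, qbinPlusL (N a + n a - ∑ j, n j * A j a) (n a)

/-- `χ_{A,u}[N](q,z) = Σ_{n ∈ ℤ^m} z^{u·n} q^{(1/2) n A nᵀ} Π_a [e_a·(N+n-nA), e_a·n]⁺`. -/
def chi {m : ℕ} (A : Matrix (Fin m) (Fin m) ℤ) (u N : Fin m → ℤ) : LL :=
  ∑ᶠ n : Fin m → ℤ, chiTerm A u N n


/-! Applying the q-Pascal rule `[c, k]⁺ = [c-1, k]⁺ + q^(c-k) [c-1, k-1]⁺` to the `a`-th factor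
splits each summand of `χ[N]` in two. The first piece is the summand of `χ[N - e_a]` at the same
`n`. The second, read at `n - e_a`, is `z^(u_a) q^(N_a - A_aa/2)` times the summand of
`χ[N - e_a A]`: the shift changes `n A` by the row `e_a A` and, `A` being symmetric, changes the
quadratic form by `A_aa - 2 (n A)_a`. Summing over `n` and reindexing the second sum gives the
recurrence. For `c < 0` the extended binomial is a signed power of `q` times `[-k-1, -c-1]` in
`q⁻¹`, and there the rule is the ordinary Pascal rule read backwards. -/

lemma Qh_add (a b : ℤ) : Qh (a + b) = Qh a * Qh b := by
  simp [Qh, AddMonoidAlgebra.single_mul_single]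

lemma Zv_add (a b : ℤ) : Zv (a + b) = Zv a * Zv b := by
  simp [Zv, AddMonoidAlgebra.single_mul_single]

lemma Qh_zero : Qh 0 = 1 := rfl

lemma Qh_pow (a : ℤ) (k : ℕ) : Qh a ^ k = Qh (k * a) := by
  induction k with
  | zero => simp [Qh_zero]
  | succ k ih => rw [pow_succ, ih, ← Qh_add]; congr 1; push_cast; ring

section gaussRecL

variable (v : LL)

lemma gaussRecL_zero_right : ∀ n, gaussRecL v n 0 = 1
  | 0 => rfl
  | _ + 1 => rfl

lemma gaussRecL_eq_zero_of_lt : ∀ {n m : ℕ}, n < m → gaussRecL v n m = 0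
  | 0, _ + 1, _ => rfl
  | n + 1, m + 1, h => by
    rw [gaussRecL, gaussRecL_eq_zero_of_lt (by omega), gaussRecL_eq_zero_of_lt (by omega)]
    ring

lemma gaussRecL_self : ∀ n, gaussRecL v n n = 1
  | 0 => rfl
  | n + 1 => by rw [gaussRecL, gaussRecL_eq_zero_of_lt v n.lt_succ_self, gaussRecL_self n]; ring

lemma gaussRecL_pascal : ∀ {n m : ℕ}, m ≤ n →
    gaussRecL v (n + 1) (m + 1) = gaussRecL v n (m + 1) + v ^ (n - m) * gaussRecL v n m
  | 0, 0, _ => by simp [gaussRecL]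
  | n + 1, 0, _ => by
    have ih := gaussRecL_pascal (n := n) (m := 0) n.zero_le
    simp only [gaussRecL.eq_4, gaussRecL_zero_right, Nat.sub_zero, pow_succ, mul_one] at ih ⊢
    linear_combination v * ih
  | n + 1, m + 1, h => by
    obtain ⟨k, hk⟩ := Nat.exists_eq_add_of_le (Nat.le_of_succ_le_succ h)
    subst hk
    rw [show m + k + 1 - (m + 1) = k by omega]
    cases k with
    | zero => simp [gaussRecL_self, gaussRecL_eq_zero_of_lt]
    | succ k =>
      have i1 := gaussRecL_pascal (n := m + (k + 1)) (m := m + 1) (by omega)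
      have i2 := gaussRecL_pascal (n := m + (k + 1)) (m := m) (by omega)
      rw [show m + (k + 1) - (m + 1) = k by omega] at i1
      rw [Nat.add_sub_cancel_left] at i2
      simp only [gaussRecL.eq_4] at i1 i2 ⊢
      linear_combination v ^ (m + 2) * i1 + i2

lemma gaussZL_natCast (n m : ℕ) : gaussZL v n m = gaussRecL v n m := by
  rw [gaussZL]
  split_ifs with h
  · simp
  · rw [gaussRecL_eq_zero_of_lt v (by omega)]

lemma gaussZL_zero_right {n : ℤ} (hn : 0 ≤ n) : gaussZL v n 0 = 1 := by
  rw [gaussZL, if_pos ⟨le_rfl, hn⟩, Int.toNat_zero, gaussRecL_zero_right]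

lemma gaussZL_of_neg_right {n m : ℤ} (hm : m < 0) : gaussZL v n m = 0 :=
  if_neg (by omega)

lemma gaussZL_of_lt {n m : ℤ} (h : n < m) : gaussZL v n m = 0 :=
  if_neg (by omega)

end gaussRecL

lemma gaussZL_Qh_pascal (s : ℤ) {n : ℤ} (hn : 0 < n) (m : ℤ) :
    gaussZL (Qh s) n m =
      gaussZL (Qh s) (n - 1) m + Qh (s * (n - m)) * gaussZL (Qh s) (n - 1) (m - 1) := by
  obtain ⟨n, rfl⟩ : ∃ n' : ℕ, n = n' + 1 := ⟨(n - 1).toNat, by omega⟩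
  rw [add_sub_cancel_right]
  rcases lt_trichotomy m 0 with hm | rfl | hm
  · simp [gaussZL_of_neg_right _ hm, gaussZL_of_neg_right _ (by omega : m - 1 < 0)]
  · rw [gaussZL_zero_right _ (by omega), gaussZL_zero_right _ (by omega),
      gaussZL_of_neg_right _ (by omega), mul_zero, add_zero]
  obtain ⟨m, rfl⟩ : ∃ m' : ℕ, m = m' + 1 := ⟨(m - 1).toNat, by omega⟩
  rw [add_sub_cancel_right, add_sub_add_right_eq_sub, ← Nat.cast_succ n, ← Nat.cast_succ m]
  rcases le_or_gt m n with hmn | hmn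
  · rw [gaussZL_natCast, gaussZL_natCast, gaussZL_natCast,
      gaussRecL_pascal _ hmn, ← Nat.cast_sub hmn, mul_comm s, ← Qh_pow]
  · rw [gaussZL_of_lt _ (by omega), gaussZL_of_lt _ (by omega), gaussZL_of_lt _ (by omega)]
    simp

lemma neg_one_pow_natAbs_sub_one {R : Type*} [Ring R] (x : ℤ) :
    (-1 : R) ^ (x - 1).natAbs = -(-1) ^ x.natAbs := by
  rcases (by omega : (x - 1).natAbs + 1 = x.natAbs ∨ x.natAbs + 1 = (x - 1).natAbs) with h | h
  · rw [← h, pow_succ, mul_neg_one, neg_neg]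
  · rw [← h, pow_succ, mul_neg_one]

def qbinNegL (n m : ℤ) : LL :=
  (-1) ^ (n - m).natAbs * Qh (-((n - m) ^ 2 + (n - m))) * gaussZL (Qh (-2)) (-m - 1) (-n - 1)

lemma qbinPlusL_of_nonneg {n : ℤ} (hn : 0 ≤ n) (m : ℤ) : qbinPlusL n m = qbinL n m :=
  if_pos hn

lemma qbinPlusL_of_neg {n : ℤ} (hn : n < 0) (m : ℤ) : qbinPlusL n m = qbinNegL n m :=
  if_neg hn.not_ge

lemma qbinL_pascal {n : ℤ} (hn : 0 < n) (m : ℤ) :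
    qbinL n m = qbinL (n - 1) m + Qh (2 * (n - m)) * qbinL (n - 1) (m - 1) :=
  gaussZL_Qh_pascal 2 hn m

lemma qbinNegL_eq_zero {n m : ℤ} (h : n < m ∨ 0 ≤ n) : qbinNegL n m = 0 := by
  rw [qbinNegL, gaussZL, if_neg (by omega), mul_zero]

lemma qbinNegL_pascal (n : ℤ) {m : ℤ} (hm : m < 0) :
    qbinNegL n m = qbinNegL (n - 1) m + Qh (2 * (n - m)) * qbinNegL (n - 1) (m - 1) := by
  have hp := gaussZL_Qh_pascal (-2) (by omega : 0 < -m) (-n)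
  rw [show -m - -n = n - m by ring] at hp
  simp only [qbinNegL, show n - 1 - m = n - m - 1 by ring, show n - 1 - (m - 1) = n - m by ring,
    show -(n - 1) - 1 = -n by ring, show -(m - 1) - 1 = -m by ring, neg_one_pow_natAbs_sub_one]
  generalize n - m = d at *
  have hq : Qh (-((d - 1) ^ 2 + (d - 1))) = Qh (2 * d) * Qh (-(d ^ 2 + d)) := by
    rw [← Qh_add]; congr 1; ring
  have hq' : Qh (2 * d) * Qh (-2 * d) = 1 := by rw [← Qh_add, ← Qh_zero]; congr 1; ring
  rw [hq, hp]
  linear_combination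
    (-(-1) ^ d.natAbs * Qh (-(d ^ 2 + d)) * gaussZL (Qh (-2)) (-m - 1) (-n - 1)) * hq'

lemma qbinPlusL_pascal (n m : ℤ) :
    qbinPlusL n m = qbinPlusL (n - 1) m + Qh (2 * (n - m)) * qbinPlusL (n - 1) (m - 1) := by
  rcases lt_trichotomy n 0 with hn | rfl | hn
  · simp only [qbinPlusL_of_neg hn, qbinPlusL_of_neg (by omega : n - 1 < 0)]
    rcases lt_or_ge m 0 with hm | hm
    · exact qbinNegL_pascal n hm
    · rw [qbinNegL_eq_zero (n := n) (m := m) (by omega),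
        qbinNegL_eq_zero (n := n - 1) (m := m) (by omega),
        qbinNegL_eq_zero (n := n - 1) (m := m - 1) (by omega), mul_zero, add_zero]
  · rw [qbinPlusL_of_nonneg le_rfl, zero_sub, qbinPlusL_of_neg neg_one_lt_zero,
      qbinPlusL_of_neg neg_one_lt_zero]
    rcases lt_trichotomy m 0 with hm | rfl | hm
    · rw [qbinL, gaussZL_of_neg_right _ hm, ← qbinNegL_eq_zero (n := 0) (m := m) (by omega),
        qbinNegL_pascal 0 hm, zero_sub]
    · rw [qbinL, gaussZL_zero_right _ le_rfl, qbinNegL_eq_zero (Or.inl neg_one_lt_zero)]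
      simp [qbinNegL, gaussZL_zero_right, Qh_zero]
    · rw [qbinL, gaussZL_of_lt _ hm, qbinNegL_eq_zero (n := -1) (m := m) (by omega),
        qbinNegL_eq_zero (n := -1) (m := m - 1) (by omega), mul_zero, add_zero]
  · simp only [qbinPlusL_of_nonneg hn.le, qbinPlusL_of_nonneg (by omega : 0 ≤ n - 1)]
    exact qbinL_pascal hn m

open Matrix

lemma Fintype.prod_eq_prod_add_mul_prod {ι R : Type*} [Fintype ι] [DecidableEq ι] [CommSemiring R]
    {f g h : ι → R} {c : R} (a : ι) (ha : f a = g a + c * h a) (hg : ∀ b ≠ a, g b = f b)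
    (hh : ∀ b ≠ a, h b = f b) :
    ∏ b, f b = ∏ b, g b + c * ∏ b, h b := by
  have hrest : ∀ k : ι → R, (∀ b ≠ a, k b = f b) → ∏ b ∈ {a}ᶜ, k b = ∏ b ∈ {a}ᶜ, f b :=
    fun k hk => Finset.prod_congr rfl fun b hb => hk b (by simpa using hb)
  rw [Fintype.prod_eq_mul_prod_compl a, Fintype.prod_eq_mul_prod_compl a g,
    Fintype.prod_eq_mul_prod_compl a h, hrest g hg, hrest h hh, ha]
  ring

lemma dotProduct_mulVec_sub_single {ι R : Type*} [Fintype ι] [DecidableEq ι] [CommRing R]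
    {A : Matrix ι ι R} (hA : A.IsSymm) (n : ι → R) (a : ι) :
    (n - Pi.single a 1) ⬝ᵥ A *ᵥ (n - Pi.single a 1) = n ⬝ᵥ A *ᵥ n - 2 * (n ᵥ* A) a + A a a := by
  have hright : n ⬝ᵥ A *ᵥ Pi.single a 1 = (n ᵥ* A) a := by
    rw [dotProduct_mulVec, dotProduct_single, mul_one]
  have hleft : Pi.single a 1 ⬝ᵥ A *ᵥ n = (n ᵥ* A) a := by
    rw [single_dotProduct, one_mul, ← vecMul_transpose, hA]
  have hdiag : Pi.single a 1 ⬝ᵥ A *ᵥ Pi.single a (1 : R) = A a a := by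
    rw [single_dotProduct, one_mul, mulVec_single_one, col_apply]
  rw [mulVec_sub, sub_dotProduct, dotProduct_sub, dotProduct_sub, hright, hleft, hdiag]
  ring

lemma chiTerm_eq {m : ℕ} (A : Matrix (Fin m) (Fin m) ℤ) (u N n : Fin m → ℤ) :
    chiTerm A u N n =
      Zv (u ⬝ᵥ n) * Qh (n ⬝ᵥ A *ᵥ n) * ∏ b, qbinPlusL (N b + n b - (n ᵥ* A) b) (n b) := by
  simp only [chiTerm, dotProduct, mulVec, Finset.mul_sum, mul_assoc]
  rfl

lemma chiTerm_pascal {m : ℕ} {A : Matrix (Fin m) (Fin m) ℤ} (hA : A.IsSymm) (u N n : Fin m → ℤ)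
    (a : Fin m) :
    chiTerm A u N n = chiTerm A u (N - Pi.single a 1) n +
      Zv (u a) * Qh (2 * N a - A a a) * chiTerm A u (N - A a) (n - Pi.single a 1) := by
  set e : Fin m → ℤ := Pi.single a 1
  have hprod : ∏ b, qbinPlusL (N b + n b - (n ᵥ* A) b) (n b) =
      ∏ b, qbinPlusL ((N - e) b + n b - (n ᵥ* A) b) (n b) + Qh (2 * (N a - (n ᵥ* A) a)) *
        ∏ b, qbinPlusL ((N - A a) b + (n - e) b - ((n - e) ᵥ* A) b) ((n - e) b) := by
    refine Fintype.prod_eq_prod_add_mul_prod a ?_ (fun b hb => ?_) (fun b hb => ?_)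
    · simp only [sub_vecMul, single_one_vecMul, Pi.sub_apply, row_apply, e, Pi.single_eq_same]
      convert qbinPlusL_pascal (N a + n a - (n ᵥ* A) a) (n a) using 3
      · ring
      · congr 1; ring
      · congr 1; ring
    · simp [e, hb]
    · simp only [e, hb, sub_vecMul, single_one_vecMul, Pi.sub_apply, row_apply, ne_eq,
        not_false_eq_true, Pi.single_eq_of_ne, sub_zero]
      congr 1; ring
  have hz : Zv (u ⬝ᵥ n) = Zv (u a) * Zv (u ⬝ᵥ (n - e)) := by
    rw [← Zv_add, dotProduct_sub, dotProduct_single, mul_one, add_sub_cancel]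
  have hq : Qh (n ⬝ᵥ A *ᵥ n) * Qh (2 * (N a - (n ᵥ* A) a)) =
      Qh (2 * N a - A a a) * Qh ((n - e) ⬝ᵥ A *ᵥ (n - e)) := by
    rw [dotProduct_mulVec_sub_single hA, ← Qh_add, ← Qh_add]
    congr 1; ring
  rw [chiTerm_eq, chiTerm_eq, chiTerm_eq, hprod, hz]
  linear_combination (Zv (u a) * Zv (u ⬝ᵥ (n - e)) *
    ∏ b, qbinPlusL ((N - A a) b + (n - e) b - ((n - e) ᵥ* A) b) ((n - e) b)) * hq

theorem chi_recurrence_general (m : ℕ) (A : Matrix (Fin m) (Fin m) ℤ) (hA : A.IsSymm)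
    (u N : Fin m → ℤ) (a : Fin m)
    (h2 : (Function.support (chiTerm A u (fun i => N i - if i = a then 1 else 0))).Finite)
    (h3 : (Function.support (chiTerm A u (fun i => N i - A a i))).Finite) :
    chi A u N =
      chi A u (fun i => N i - if i = a then 1 else 0) +
        Zv (u a) * Qh (2 * N a - A a a) * chi A u (fun i => N i - A a i) := by
  have he : (fun i => N i - if i = a then 1 else 0) = N - Pi.single a 1 := by
    ext i; simp [Pi.single_apply]
  change (Function.support (chiTerm A u (N - A a))).Finite at h3
  change _ = _ + _ * chi A u (N - A a)
  rw [he] at h2 ⊢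
  let shift := Equiv.subRight (Pi.single a (1 : ℤ) : Fin m → ℤ)
  have hshift : (Function.support fun n => chiTerm A u (N - A a) (shift n)).Finite :=
    h3.preimage shift.injective.injOn
  calc chi A u N
      = ∑ᶠ n, (chiTerm A u (N - Pi.single a 1) n +
          Zv (u a) * Qh (2 * N a - A a a) * chiTerm A u (N - A a) (shift n)) :=
        finsum_congr fun n => chiTerm_pascal hA u N n a
    _ = chi A u (N - Pi.single a 1) +
          Zv (u a) * Qh (2 * N a - A a a) * ∑ᶠ n, chiTerm A u (N - A a) (shift n) := by
        rw [finsum_add_distrib h2 (hshift.subset (Function.support_mul_subset_right _ _)),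
          mul_finsum, chi]
    _ = _ := by rw [finsum_comp_equiv]; rfl

/-- the recurrence
`χ_{A,u}[N] = χ_{A,u}[N - e_a] + z^{u_a} q^{N_a - A_{aa}/2} χ_{A,u}[N - e_a A]`. -/
theorem chi_recurrence (m : ℕ) (A : Matrix (Fin m) (Fin m) ℤ) (hA : A.IsSymm)
    (u N : Fin m → ℤ) (a : Fin m)
    (h1 : (Function.support (chiTerm A u N)).Finite)
    (h2 : (Function.support (chiTerm A u (fun i => N i - if i = a then 1 else 0))).Finite)
    (h3 : (Function.support (chiTerm A u (fun i => N i - A a i))).Finite) :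
    chi A u N =
      chi A u (fun i => N i - if i = a then 1 else 0) +
        Zv (u a) * Qh (2 * N a - A a a) * chi A u (fun i => N i - A a i) :=
  chi_recurrence_general m A hA u N a h2 h3

end
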